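/- Let L_down : ℝ^n → ℝ be twice continuously differentiable with ‖∇²L_down(θ)‖_op ≤ L everywhere. Fix θ, η > 0, and a differentiable map φ ↦ g_pre(φ) ∈ ℝ^m → ℝ^n. Define J(φ) = L_down(θ - η·g_pre(φ)) and V(φ) = ⟨∇L_down(θ), g_pre(φ)⟩. Then ‖∇_φ J(φ) + η·∇_φ V(φ)‖ ≤ L·η²·‖Dg_pre(φ)‖_op·‖g_pre(φ)‖, where Dg_pre(φ) is the Jacobian of g_pre at φ. -/

import Mathlib

open scoped RealInnerProductSpace Gradient InnerProduct
open InnerProductSpace ContinuousLinearMap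

/-!
Both designer gradients are pulled back through the Jacobian `D = Dg_pre(φ)`: by the chain rule
`∇J(φ) = -η D† ∇L_down(θ - η g_pre(φ))` and `∇V(φ) = D† ∇L_down(θ)`. Hence
`∇J(φ) + η ∇V(φ) = η D† (∇L_down(θ) - ∇L_down(θ - η g_pre(φ)))`, and the Hessian bound makes
`∇L_down` an `L`-Lipschitz map, so this is at most `|η| ‖D‖ L |η| ‖g_pre(φ)‖`.
-/

variable {E F : Type*} [NormedAddCommGroup E] [InnerProductSpace ℝ E] [CompleteSpace E]
  [NormedAddCommGroup F] [InnerProductSpace ℝ F] [CompleteSpace F]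

theorem HasGradientAt.comp_hasFDerivAt {f : F → ℝ} {f' : F} {g : E → F} {D : E →L[ℝ] F}
    {x : E} (hf : HasGradientAt f f' (g x)) (hg : HasFDerivAt g D x) :
    HasGradientAt (fun y => f (g y)) ((D†) f') x := by
  rw [hasGradientAt_iff_hasFDerivAt] at hf ⊢
  exact (hf.comp x hg).congr_fderiv (ext fun v => (adjoint_inner_left D v f').symm)

theorem HasFDerivAt.hasGradientAt_inner_left {g : E → F} {D : E →L[ℝ] F} {x : E}
    (hg : HasFDerivAt g D x) (v : F) :
    HasGradientAt (fun y => ⟪v, g y⟫) ((D†) v) x := by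
  have hinner : HasGradientAt (fun w : F => ⟪v, w⟫) v (g x) := by
    rw [hasGradientAt_iff_hasFDerivAt]
    exact (innerSL ℝ v).hasFDerivAt
  exact hinner.comp_hasFDerivAt hg

theorem ContDiff.differentiable_gradient {f : F → ℝ} {n : WithTop ℕ∞} (hf : ContDiff ℝ n f)
    (hn : 2 ≤ n) : Differentiable ℝ (∇ f) :=
  (toDual ℝ F).symm.toContinuousLinearEquiv.differentiable.comp
    ((hf.fderiv_right (m := 1) hn).differentiable one_ne_zero)

theorem ContDiff.norm_gradient_sub_le {f : F → ℝ} {n : WithTop ℕ∞} (hf : ContDiff ℝ n f)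
    (hn : 2 ≤ n) {L : ℝ} (hL : ∀ x, ‖fderiv ℝ (∇ f) x‖ ≤ L) (x y : F) :
    ‖∇ f x - ∇ f y‖ ≤ L * ‖x - y‖ :=
  convex_univ.norm_image_sub_le_of_norm_fderiv_le (fun z _ => hf.differentiable_gradient hn z)
    (fun z _ => hL z) (Set.mem_univ y) (Set.mem_univ x)

theorem designer_gradient_surrogate_bound_general
    (n m : ℕ) (Ldown : EuclideanSpace ℝ (Fin n) → ℝ)
    (L : ℝ)
    (hC2 : ContDiff ℝ 2 Ldown)
    (hhess : ∀ x : EuclideanSpace ℝ (Fin n), ‖fderiv ℝ (gradient Ldown) x‖ ≤ L)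
    (θ : EuclideanSpace ℝ (Fin n)) (η : ℝ)
    (gpre : EuclideanSpace ℝ (Fin m) → EuclideanSpace ℝ (Fin n))
    (hgdiff : Differentiable ℝ gpre)
    (φ : EuclideanSpace ℝ (Fin m)) :
    ‖gradient (fun ψ => Ldown (θ - η • gpre ψ)) φ +
        η • gradient (fun ψ => ⟪gradient Ldown θ, gpre ψ⟫) φ‖ ≤
      L * η ^ 2 * ‖fderiv ℝ gpre φ‖ * ‖gpre φ‖ := by
  set D := fderiv ℝ gpre φ
  set θ' := θ - η • gpre φ
  have hD : HasFDerivAt gpre D φ := (hgdiff φ).hasFDerivAt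
  have hJ : HasGradientAt (fun ψ => Ldown (θ - η • gpre ψ)) (-(η • (D†) (∇ Ldown θ'))) φ := by
    have hL : HasGradientAt Ldown (∇ Ldown θ') θ' :=
      (hC2.differentiable (by norm_num) θ').hasGradientAt
    simpa using hL.comp_hasFDerivAt (g := fun ψ => θ - η • gpre ψ) ((hD.const_smul η).const_sub θ)
  have hV := hD.hasGradientAt_inner_left (∇ Ldown θ)
  have hstep : ‖θ - θ'‖ = |η| * ‖gpre φ‖ := by simp [θ', norm_smul]
  rw [hJ.gradient, hV.gradient, neg_add_eq_sub, ← smul_sub, ← map_sub]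
  calc ‖η • (D†) (∇ Ldown θ - ∇ Ldown θ')‖
      = |η| * ‖(D†) (∇ Ldown θ - ∇ Ldown θ')‖ := by rw [norm_smul, Real.norm_eq_abs]
    _ ≤ |η| * (‖D†‖ * ‖∇ Ldown θ - ∇ Ldown θ'‖) := by gcongr; exact le_opNorm _ _
    _ ≤ |η| * (‖D‖ * (L * ‖θ - θ'‖)) := by
        rw [LinearIsometryEquiv.norm_map]
        gcongr
        exact hC2.norm_gradient_sub_le le_rfl hhess θ θ'
    _ = L * η ^ 2 * ‖D‖ * ‖gpre φ‖ := by rw [hstep, ← sq_abs η]; ring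

/-- Gradient-level surrogate bound: the designer gradients of `J` and of `-η V`
differ by `O(η²)`, controlled by the Hessian bound and the Jacobian norm of `g_pre`. -/
theorem designer_gradient_surrogate_bound
    (n m : ℕ) (Ldown : EuclideanSpace ℝ (Fin n) → ℝ)
    (L : ℝ)
    (hC2 : ContDiff ℝ 2 Ldown)
    (hhess : ∀ x : EuclideanSpace ℝ (Fin n), ‖fderiv ℝ (gradient Ldown) x‖ ≤ L)
    (θ : EuclideanSpace ℝ (Fin n)) (η : ℝ) (hη : 0 < η)
    (gpre : EuclideanSpace ℝ (Fin m) → EuclideanSpace ℝ (Fin n))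
    (hgdiff : Differentiable ℝ gpre)
    (φ : EuclideanSpace ℝ (Fin m)) :
    ‖gradient (fun ψ => Ldown (θ - η • gpre ψ)) φ +
        η • gradient (fun ψ => ⟪gradient Ldown θ, gpre ψ⟫) φ‖ ≤
      L * η ^ 2 * ‖fderiv ℝ gpre φ‖ * ‖gpre φ‖ :=
  designer_gradient_surrogate_bound_general n m Ldown L hC2 hhess θ η gpre hgdiff φ
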